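/- arXiv:1311.3451 — 6 statements merged into one kernel-verified Lean document; each statement's English description precedes it below -/
import Mathlib

section
/- Let G be a hypergroupoid. Then the power set P(G) of the set of all arrows of G, with product U·V = {t | ∃u ∈ U, v ∈ V composable with t ∈ u∘v}, involution U* = {x* | x ∈ U}, and the set of identities as unit, satisfies the modularity law: U ∩ (V·W) ⊆ ((U·W*) ∩ V)·W. -/
/-- A hypergroupoid: objects `O`, arrows `G`, source/target maps, involution `inv`,
multivalued composition `comp x y` (empty for non-composable pairs), identities `one e`,
with axioms (HG1), (HG2), (HG3). -/
structure Hypergroupoid (O : Type*) (G : Type*) where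
  src : G → O
  tgt : G → O
  inv : G → G
  comp : G → G → Set G
  one : O → G
  one_src : ∀ e, src (one e) = e
  one_tgt : ∀ e, tgt (one e) = e
  one_comp : ∀ x, comp (one (tgt x)) x = {x}
  comp_one : ∀ x, comp x (one (src x)) = {x}
  comp_empty : ∀ x y, src x ≠ tgt y → comp x y = ∅
  mem_comp_src : ∀ {x y z}, z ∈ comp x y → src z = src y
  mem_comp_tgt : ∀ {x y z}, z ∈ comp x y → tgt z = tgt x
  inv_src : ∀ x, src (inv x) = tgt x
  inv_tgt : ∀ x, tgt (inv x) = src x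
  inv_inv : ∀ x, inv (inv x) = x
  assoc : ∀ x y z, (⋃ w ∈ comp x y, comp w z) = ⋃ w ∈ comp y z, comp x w
  hg3_left : ∀ {x y z}, x ∈ comp y z → z ∈ comp (inv y) x
  hg3_right : ∀ {x y z}, x ∈ comp y z → y ∈ comp x (inv z)

namespace Hypergroupoid

variable {O G : Type*}

/-- Product of two sets of arrows: `U·V = ⋃_{u∈U, v∈V} u∘v`. -/
def setMul (H : Hypergroupoid O G) (U V : Set G) : Set G :=
  {t | ∃ u ∈ U, ∃ v ∈ V, t ∈ H.comp u v}

/-- Involution of a set of arrows: `U* = {x* | x ∈ U}`. -/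
def setInv (H : Hypergroupoid O G) (U : Set G) : Set G :=
  H.inv '' U

end Hypergroupoid

/-- In the power set quantale of a hypergroupoid, the modularity law holds:
`U ∩ (V·W) ⊆ ((U·W*) ∩ V)·W`. -/
theorem stmt7 {O G : Type*} (H : Hypergroupoid O G) (U V W : Set G) :
    U ∩ H.setMul V W ⊆ H.setMul (H.setMul U (H.setInv W) ∩ V) W := by
  rintro t ⟨htU, v, hv, w, hw, ht⟩
  have hvUW : v ∈ H.setMul U (H.setInv W) := ⟨t, htU, H.inv w, ⟨w, hw, rfl⟩, H.hg3_right ht⟩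
  exact ⟨v, ⟨hvUW, hv⟩, w, hw, ht⟩
end

section
/- Let G be a hypergroupoid and x,y,z arrows with x ∈ y∘z. Then y ∈ x∘z*, so that x ∈ y∘z with y ∈ x∘z*, and hence x ∈ (x∘z*)∘z. Consequently, for subsets U, V, W: U ∩ V·W ⊆ (U·W* ∩ V)·W. -/
/-- If `x ∈ y∘z` then `y ∈ x∘z*` and `x ∈ (x∘z*)∘z`; consequently the modularity law
`U ∩ V·W ⊆ (U·W* ∩ V)·W` holds for subsets of arrows. -/
theorem stmt10 {O G : Type*} (H : Hypergroupoid O G) :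
    (∀ x y z : G, x ∈ H.comp y z →
      y ∈ H.comp x (H.inv z) ∧ x ∈ H.setMul (H.comp x (H.inv z)) {z}) ∧
    (∀ U V W : Set G, U ∩ H.setMul V W ⊆ H.setMul (H.setMul U (H.setInv W) ∩ V) W) := by
  constructor
  · intro x y z hx
    have hy := H.hg3_right hx
    exact ⟨hy, ⟨y, hy, z, rfl, hx⟩⟩
  · rintro U V W t ⟨htU, v, hv, w, hw, ht⟩
    exact ⟨v, ⟨⟨t, htU, H.inv w, ⟨w, hw, rfl⟩, H.hg3_right ht⟩, hv⟩, w, hw, ht⟩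
end

section
/- Let Q be an atomic modular quantale, i.e. Q = P(X) as a complete lattice for some set X, with the quantale structure. Let E = {x ∈ X | {x} ≤ 1}. Then for every atom q ∈ X there exists a unique e ∈ E such that {e}·{q} = {q}. -/
/-!
Distributing `1 · {q} = {q}` over the points of `1` gives some `e ∈ 1` with `q ∈ {e} · {q}`,
and `{e} · {q} ⊆ 1 · {q} = {q}`. For uniqueness, a product of two subidentities lies below
both, so for distinct `e, e' ∈ 1` we get `{e'} · {e} = ∅`, which is incompatible with
`{e'} · ({e} · {q}) = {q}`.
-/

namespace SetQuantale

variable {X : Type*} {mul : Set X → Set X → Set X} {one : Set X}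

theorem mul_mono_left (hdist : ∀ (s : Set (Set X)) (b), mul (⋃₀ s) b = ⋃ a ∈ s, mul a b)
    {a b : Set X} (hab : a ⊆ b) (c : Set X) : mul a c ⊆ mul b c := by
  have h := hdist {a, b} c
  rw [Set.sUnion_pair, Set.union_eq_self_of_subset_left hab] at h
  rw [h]
  exact Set.subset_biUnion_of_mem (u := fun a => mul a c) (Set.mem_insert a {b})

theorem mul_mono_right (hdist : ∀ (a) (s : Set (Set X)), mul a (⋃₀ s) = ⋃ b ∈ s, mul a b)
    {a b : Set X} (hab : a ⊆ b) (c : Set X) : mul c a ⊆ mul c b := by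
  have h := hdist c {a, b}
  rw [Set.sUnion_pair, Set.union_eq_self_of_subset_left hab] at h
  rw [h]
  exact Set.subset_biUnion_of_mem (u := fun a => mul c a) (Set.mem_insert a {b})

theorem empty_mul (hdist : ∀ (s : Set (Set X)) (b), mul (⋃₀ s) b = ⋃ a ∈ s, mul a b)
    (b : Set X) : mul ∅ b = ∅ := by
  simpa using hdist ∅ b

theorem mul_subset_inter_of_subset_one
    (hdist₁ : ∀ (s : Set (Set X)) (b), mul (⋃₀ s) b = ⋃ a ∈ s, mul a b)
    (hdist₂ : ∀ (a) (s : Set (Set X)), mul a (⋃₀ s) = ⋃ b ∈ s, mul a b)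
    (hone₁ : ∀ a, mul one a = a) (hone₂ : ∀ a, mul a one = a)
    {a b : Set X} (ha : a ⊆ one) (hb : b ⊆ one) : mul a b ⊆ a ∩ b := by
  refine Set.subset_inter ?_ ?_
  · simpa only [hone₂] using mul_mono_right hdist₂ hb a
  · simpa only [hone₁] using mul_mono_left hdist₁ ha b

theorem exists_mem_singleton_mul
    (hdist : ∀ (s : Set (Set X)) (b), mul (⋃₀ s) b = ⋃ a ∈ s, mul a b)
    {b : Set X} (hb : mul one b = b) {x : X} (hx : x ∈ b) : ∃ e ∈ one, x ∈ mul {e} b := by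
  have h := hdist ((fun e => {e}) '' one) b
  rw [Set.sUnion_image, Set.biUnion_of_singleton, hb] at h
  rw [h] at hx
  simpa only [Set.mem_iUnion, Set.mem_image, exists_prop, exists_exists_and_eq_and] using hx

theorem exists_singleton_mul_singleton_eq
    (hdist : ∀ (s : Set (Set X)) (b), mul (⋃₀ s) b = ⋃ a ∈ s, mul a b)
    (hone : ∀ a, mul one a = a) (q : X) : ∃ e ∈ one, mul {e} {q} = {q} := by
  obtain ⟨e, he, hq⟩ := exists_mem_singleton_mul hdist (hone {q}) rfl
  refine ⟨e, he, Set.Subset.antisymm ?_ (Set.singleton_subset_iff.2 hq)⟩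
  simpa only [hone] using mul_mono_left hdist (Set.singleton_subset_iff.2 he) {q}

theorem eq_of_singleton_mul_singleton_eq
    (hassoc : ∀ a b c, mul (mul a b) c = mul a (mul b c))
    (hdist₁ : ∀ (s : Set (Set X)) (b), mul (⋃₀ s) b = ⋃ a ∈ s, mul a b)
    (hdist₂ : ∀ (a) (s : Set (Set X)), mul a (⋃₀ s) = ⋃ b ∈ s, mul a b)
    (hone₁ : ∀ a, mul one a = a) (hone₂ : ∀ a, mul a one = a)
    {e e' q : X} (he : e ∈ one) (he' : e' ∈ one)
    (hq : mul {e} {q} = {q}) (hq' : mul {e'} {q} = {q}) : e' = e := by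
  by_contra hne
  have hdisj : mul {e'} {e} = ∅ := by
    have h := mul_subset_inter_of_subset_one hdist₁ hdist₂ hone₁ hone₂
      (Set.singleton_subset_iff.2 he') (Set.singleton_subset_iff.2 he)
    rwa [Set.singleton_inter_eq_empty.2 (Set.mem_singleton_iff.not.2 hne),
      Set.subset_empty_iff] at h
  have h := hassoc {e'} {e} {q}
  rw [hdisj, empty_mul hdist₁, hq, hq'] at h
  exact Set.singleton_ne_empty q h.symm

end SetQuantale

open SetQuantale in
theorem stmt12_general (X : Type*) (mul : Set X → Set X → Set X) (one : Set X)
    (hassoc : ∀ a b c, mul (mul a b) c = mul a (mul b c))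
    (hdist₁ : ∀ (s : Set (Set X)) (b), mul (⋃₀ s) b = ⋃ a ∈ s, mul a b)
    (hdist₂ : ∀ (a) (s : Set (Set X)), mul a (⋃₀ s) = ⋃ b ∈ s, mul a b)
    (hone₁ : ∀ a, mul one a = a) (hone₂ : ∀ a, mul a one = a) :
    ∀ q : X, ∃! e : X, {e} ⊆ one ∧ mul {e} {q} = {q} := by
  intro q
  obtain ⟨e, he, hq⟩ := exists_singleton_mul_singleton_eq hdist₁ hone₁ q
  refine ⟨e, ⟨Set.singleton_subset_iff.2 he, hq⟩, fun e' ⟨he', hq'⟩ => ?_⟩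
  exact eq_of_singleton_mul_singleton_eq hassoc hdist₁ hdist₂ hone₁ hone₂ he
    (Set.singleton_subset_iff.1 he') hq hq'

/-- In an atomic modular quantale `P(X)` (power-set complete lattice with a bilinear
associative unital multiplication, order-preserving product-reversing involution and the
modularity law), with `E = {x | {x} ≤ 1}`, every atom `{q}` admits a unique `e ∈ E`
with `{e}·{q} = {q}`. -/
theorem stmt12 (X : Type*) (mul : Set X → Set X → Set X) (one : Set X) (star : Set X → Set X)
    (hassoc : ∀ a b c, mul (mul a b) c = mul a (mul b c))
    (hdist₁ : ∀ (s : Set (Set X)) (b), mul (⋃₀ s) b = ⋃ a ∈ s, mul a b)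
    (hdist₂ : ∀ (a) (s : Set (Set X)), mul a (⋃₀ s) = ⋃ b ∈ s, mul a b)
    (hone₁ : ∀ a, mul one a = a) (hone₂ : ∀ a, mul a one = a)
    (hstar_mono : ∀ a b, a ⊆ b → star a ⊆ star b)
    (hstar_inv : ∀ a, star (star a) = a)
    (hstar_mul : ∀ a b, star (mul a b) = mul (star b) (star a))
    (hmod : ∀ a b c, a ∩ mul b c ⊆ mul (mul a (star c) ∩ b) c) :
    ∀ q : X, ∃! e : X, {e} ⊆ one ∧ mul {e} {q} = {q} :=
  stmt12_general X mul one hassoc hdist₁ hdist₂ hone₁ hone₂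
end

section
/- Let G be a group acting on sets, E, E', E'' be G-sets, and consider G-equivariant relations (G-invariant subsets of products). For g a G-invariant subset of E''×E', g' a G-invariant subset of E'×E, and points witnessing the composition, define for an atom (orbit) a in the composition g∘g' the coefficient μ(a;g,g') = |{z ∈ E' | (x,z) ∈ g and (z,y) ∈ g'}| for any (x,y) ∈ a, and |g|_l = |{z | (z,u) ∈ g}| for u in the source orbit. Then when all these cardinalities are finite, for transitive G-sets one has |g|_l·|g'|_l = Σ_{a orbit ⊆ g∘g'} μ(a;g,g')·|a|_l, where the sum ranges over the G-orbits a contained in the composed relation. -/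
/-!
Count the pairs `(v, z)` with `(v, z) ∈ g` and `(z, u) ∈ g'` in two ways. Grouped by `z`, the
pairs over `z` form the `g`-fibre over `z`, which `G` carries bijectively onto the `g`-fibre
over `u'` because `E'` is transitive; this gives `|g|_l · |g'|_l`. Grouped by the orbit `a` of
`(v, u)`, the pairs over `a` are fibred over `{v | (v, u) ∈ a}`, with fibre the middle set
`μ` at `(v, u)`, again in bijection with the middle set at the chosen representative of `a`.
Orbits not contained in `g ∘ g'` have empty middle sets, so they contribute nothing.
-/
namespace Nat

theorem card_sigma_eq_finsum {ι : Type*} {F : ι → Type*} [Finite (Σ i, F i)] :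
    Nat.card (Σ i, F i) = ∑ᶠ i, Nat.card (F i) := by
  let s : Set ι := Set.range (@Sigma.fst ι F)
  have hsupp : (Function.support fun i => Nat.card (F i)) ⊆ s := by
    intro i hi
    obtain ⟨x⟩ := (Nat.card_ne_zero.1 hi).1
    exact ⟨⟨i, x⟩, rfl⟩
  have : Fintype s := (Set.finite_range _).fintype
  have (i : ι) : Finite (F i) := Finite.of_injective _ (sigma_mk_injective (i := i))
  rw [← Set.indicator_eq_self.2 hsupp, ← finsum_mem_def, ← finsum_set_coe_eq_finsum_mem,
    finsum_eq_sum_of_fintype, ← Nat.card_sigma]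
  exact Nat.card_congr (Equiv.sigmaSubtypeEquivOfSubset F _ fun i x => ⟨⟨i, x⟩, rfl⟩).symm

theorem card_sigma_eq_finsum_card_fiber {α ι : Type*} {F : α → Type*} [Finite (Σ a, F a)]
    (f : α → ι) : Nat.card (Σ a, F a) = ∑ᶠ i, Nat.card (Σ a : {a // f a = i}, F a) := by
  let e : (Σ a, F a) ≃ Σ i, Σ a : {a // f a = i}, F a :=
    (Equiv.sigmaCongrLeft (Equiv.sigmaFiberEquiv f)).symm.trans
      (Equiv.sigmaAssoc fun i (a : {a // f a = i}) => F a)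
  have : Finite (Σ i, Σ a : {a // f a = i}, F a) := Finite.of_equiv _ e
  rw [Nat.card_congr e, card_sigma_eq_finsum]

end Nat

theorem nonempty_sigma_equiv_prod {ι A : Type*} {F : ι → Type*}
    (h : ∀ i, Nonempty (F i ≃ A)) : Nonempty ((Σ i, F i) ≃ ι × A) :=
  ⟨(Equiv.sigmaCongrRight fun i => (h i).some).trans (Equiv.sigmaEquivProd _ _)⟩

def sigmaCompFiberEquiv {α β γ : Type*} (R : Set (α × β)) (S : Set (β × γ)) (c : γ) :
    (Σ a, {b | (a, b) ∈ R ∧ (b, c) ∈ S}) ≃ Σ b : {b | (b, c) ∈ S}, {a | (a, (b : β)) ∈ R} where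
  toFun x := ⟨⟨x.2.1, x.2.2.2⟩, x.1, x.2.2.1⟩
  invFun y := ⟨y.2.1, y.1.1, y.2.2, y.1.2⟩
  left_inv _ := rfl
  right_inv _ := rfl

theorem MulAction.mk_eq_iff_mem_orbit_out {G α : Type*} [Group G] [MulAction G α] {a : α}
    {q : Quotient (orbitRel G α)} : Quotient.mk _ a = q ↔ a ∈ orbit G q.out :=
  Quotient.mk_eq_iff_out.trans orbitRel_apply

section Invariant

variable {G α β : Type*} [Group G] [MulAction G α] [MulAction G β]
  {P : α → β → Prop}

theorem MulAction.nonempty_setOf_equiv_of_mem_orbit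
    (hP : ∀ (σ : G) a b, P a b → P (σ • a) (σ • b)) {a a' : α} (h : a' ∈ orbit G a) :
    Nonempty ({b | P a' b} ≃ {b | P a b}) := by
  obtain ⟨σ, rfl⟩ := h
  refine ⟨(MulAction.toPerm σ⁻¹ : Equiv.Perm β).subtypeEquiv fun b => ⟨fun hb => ?_, fun hb => ?_⟩⟩
  · simpa using hP σ⁻¹ _ _ hb
  · simpa using hP σ _ _ hb

theorem MulAction.orbit_subset_setOf_exists
    (hP : ∀ (σ : G) a b, P a b → P (σ • a) (σ • b)) {a : α} (h : ∃ b, P a b) :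
    orbit G a ⊆ {a' | ∃ b, P a' b} := by
  rintro _ ⟨σ, rfl⟩
  obtain ⟨b, hb⟩ := h
  exact ⟨σ • b, hP σ a b hb⟩

theorem MulAction.nonempty_sigma_comp_equiv_prod [IsPretransitive G β] {γ : Type*}
    (R : Set (α × β)) (S : Set (β × γ)) (hR : ∀ σ : G, ∀ p ∈ R, σ • p ∈ R) (b₀ : β) (c : γ) :
    Nonempty ((Σ a, {b | (a, b) ∈ R ∧ (b, c) ∈ S}) ≃ {b | (b, c) ∈ S} × {a | (a, b₀) ∈ R}) := by
  obtain ⟨e⟩ := nonempty_sigma_equiv_prod fun b : {b | (b, c) ∈ S} =>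
    nonempty_setOf_equiv_of_mem_orbit (P := fun b a => (a, b) ∈ R) (fun σ _ _ h => hR σ _ h)
      (mem_orbit_iff.2 (exists_smul_eq G b₀ b))
  exact ⟨(sigmaCompFiberEquiv R S c).trans e⟩

theorem MulAction.card_sigma_orbit_fiber (hP : ∀ (σ : G) a b, P a b → P (σ • a) (σ • b))
    {γ : Type*} (φ : γ → α) (q : Quotient (orbitRel G α)) :
    Nat.card (Σ c : {c // Quotient.mk _ (φ c) = q}, {b | P (φ c) b}) =
      Nat.card {b | P q.out b} * Nat.card {c | φ c ∈ orbit G q.out} := by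
  obtain ⟨e⟩ := nonempty_sigma_equiv_prod fun c : {c // Quotient.mk _ (φ c) = q} =>
    nonempty_setOf_equiv_of_mem_orbit hP (mk_eq_iff_mem_orbit_out.1 c.2)
  rw [Nat.card_congr e, Nat.card_prod, mul_comm,
    Nat.card_congr (Equiv.subtypeEquivRight fun c => mk_eq_iff_mem_orbit_out)]
  rfl

end Invariant

theorem stmt15_general {G : Type*} [Group G] {E E' E'' : Type*}
    [MulAction G E] [MulAction G E'] [MulAction G E'']
    [MulAction.IsPretransitive G E']
    (g : Set (E'' × E')) (g' : Set (E' × E))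
    (hg : ∀ (σ : G), ∀ p ∈ g, (σ • p.1, σ • p.2) ∈ g)
    (hg' : ∀ (σ : G), ∀ p ∈ g', (σ • p.1, σ • p.2) ∈ g')
    (u' : E') (u : E)
    (hfin : {z : E'' | (z, u') ∈ g}.Finite)
    (hfin' : {z : E' | (z, u) ∈ g'}.Finite) :
    Nat.card {z : E'' | (z, u') ∈ g} * Nat.card {z : E' | (z, u) ∈ g'} =
      ∑ᶠ q ∈ {q : Quotient (MulAction.orbitRel G (E'' × E)) |
          MulAction.orbit G (Quotient.out q) ⊆
            {p : E'' × E | ∃ z, (p.1, z) ∈ g ∧ (z, p.2) ∈ g'}},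
        Nat.card {z : E' | ((Quotient.out q).1, z) ∈ g ∧ (z, (Quotient.out q).2) ∈ g'} *
          Nat.card {z : E'' | (z, u) ∈ MulAction.orbit G (Quotient.out q)} := by
  have hcomp : ∀ (σ : G) (p : E'' × E) z, (p.1, z) ∈ g ∧ (z, p.2) ∈ g' →
      (σ • p.1, σ • z) ∈ g ∧ (σ • z, σ • p.2) ∈ g' :=
    fun σ p z h => ⟨hg σ _ h.1, hg' σ _ h.2⟩
  obtain ⟨e⟩ := MulAction.nonempty_sigma_comp_equiv_prod g g' hg u' u
  have := hfin.to_subtype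
  have := hfin'.to_subtype
  have : Finite (Σ v : E'', {z | (v, z) ∈ g ∧ (z, u) ∈ g'}) := Finite.of_equiv _ e.symm
  calc _ = Nat.card (Σ v : E'', {z | (v, z) ∈ g ∧ (z, u) ∈ g'}) := by
        rw [Nat.card_congr e, Nat.card_prod, mul_comm]
    _ = ∑ᶠ q, Nat.card (Σ v : {v : E'' // Quotient.mk (MulAction.orbitRel G (E'' × E)) (v, u) = q},
          {z | ((v : E''), z) ∈ g ∧ (z, u) ∈ g'}) :=
        Nat.card_sigma_eq_finsum_card_fiber _
    _ = ∑ᶠ q, Nat.card {z : E' | ((Quotient.out q).1, z) ∈ g ∧ (z, (Quotient.out q).2) ∈ g'} *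
          Nat.card {z : E'' | (z, u) ∈ MulAction.orbit G (Quotient.out q)} :=
        finsum_congr (MulAction.card_sigma_orbit_fiber hcomp fun v => (v, u))
    _ = _ := by
        rw [finsum_mem_def, Set.indicator_eq_self.2]
        intro q hq
        obtain ⟨z, hz⟩ := (Nat.card_ne_zero.1 (left_ne_zero_of_mul hq)).1
        exact MulAction.orbit_subset_setOf_exists hcomp ⟨z, hz⟩

/-- For `G`-equivariant relations `g ⊆ E'' × E'` and `g' ⊆ E' × E` between transitive
`G`-sets, with finite multiplicities, the left multiplicities satisfy
`|g|_l · |g'|_l = Σ_{a orbit ⊆ g∘g'} μ(a;g,g') · |a|_l`, the sum ranging over the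
`G`-orbits `a` of the diagonal action on `E'' × E` contained in the composed relation. -/
theorem stmt15 {G : Type*} [Group G] {E E' E'' : Type*}
    [MulAction G E] [MulAction G E'] [MulAction G E'']
    [MulAction.IsPretransitive G E] [MulAction.IsPretransitive G E']
    [MulAction.IsPretransitive G E'']
    (g : Set (E'' × E')) (g' : Set (E' × E))
    (hg : ∀ (σ : G), ∀ p ∈ g, (σ • p.1, σ • p.2) ∈ g)
    (hg' : ∀ (σ : G), ∀ p ∈ g', (σ • p.1, σ • p.2) ∈ g')
    (u' : E') (u : E)
    (hfin : {z : E'' | (z, u') ∈ g}.Finite)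
    (hfin' : {z : E' | (z, u) ∈ g'}.Finite) :
    Nat.card {z : E'' | (z, u') ∈ g} * Nat.card {z : E' | (z, u) ∈ g'} =
      ∑ᶠ q ∈ {q : Quotient (MulAction.orbitRel G (E'' × E)) |
          MulAction.orbit G (Quotient.out q) ⊆
            {p : E'' × E | ∃ z, (p.1, z) ∈ g ∧ (z, p.2) ∈ g'}},
        Nat.card {z : E' | ((Quotient.out q).1, z) ∈ g ∧ (z, (Quotient.out q).2) ∈ g'} *
          Nat.card {z : E'' | (z, u) ∈ MulAction.orbit G (Quotient.out q)} :=
  stmt15_general g g' hg hg' u' u hfin hfin'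
end

section
/- Let G be a locally finite hypergroupoid with finite left and right multiplicities |g|_l, |g|_r ∈ ℕ₊, and define χ(g) = |g|_l / |g|_r ∈ ℚ₊. Given the identities |a|_l·μ(a;g,g') = |g'|_l·μ(g';g*,a) and |a|_r·μ(a;g,g') = |g|_r·μ(g;a,g'*) together with the dual symmetry μ(a;g,g') = μ(a*;g'*,g*) and |g*|_l = |g|_r, it follows that χ is multiplicative: for arrows a, g, g' with a ∈ g∘g' and μ(a;g,g') > 0, χ(a) = χ(g)·χ(g'). -/
/-! Multiply (1) by `|g|_r |g'|_r` and (2) by `|g|_l |g'|_l`. The two right-hand sides are linked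
by (2) for the triple `(g'; g*, a)`, whose coefficient `μ(g*; g', a*)` equals `μ(g; a, g'*)` by (3).
This gives `|a|_l |g|_r |g'|_r μ = |a|_r |g|_l |g'|_l μ` with `μ = μ(a; g, g') > 0`, which cancels. -/

section Hypergroupoid

variable {G : Type*} {star : G → G} {l r : G → ℕ} {μ : G → G → G → ℕ}

theorem r_star_eq_l (hss : ∀ g, star (star g) = g) (hstar : ∀ g, l (star g) = r g) (g : G) :
    r (star g) = l g := by
  rw [← hstar (star g), hss]

theorem r_mul_mu_star_eq_l_mul_mu (hss : ∀ g, star (star g) = g)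
    (hstar : ∀ g, l (star g) = r g)
    (h2 : ∀ a g g', r a * μ a g g' = r g * μ g a (star g'))
    (h3 : ∀ a g g', μ a g g' = μ (star a) (star g') (star g)) (a g g' : G) :
    r g' * μ g' (star g) a = l g * μ g a (star g') := by
  rw [h2, r_star_eq_l hss hstar, h3 (star g) g' (star a), hss, hss]

theorem l_mul_r_mul_eq_r_mul_l_mul_of_pos (hss : ∀ g, star (star g) = g)
    (hstar : ∀ g, l (star g) = r g)
    (h1 : ∀ a g g', l a * μ a g g' = l g' * μ g' (star g) a)
    (h2 : ∀ a g g', r a * μ a g g' = r g * μ g a (star g'))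
    (h3 : ∀ a g g', μ a g g' = μ (star a) (star g') (star g)) {a g g' : G}
    (hμ : 0 < μ a g g') :
    l a * (r g * r g') = r a * (l g * l g') := by
  refine Nat.eq_of_mul_eq_mul_right hμ ?_
  calc l a * (r g * r g') * μ a g g'
      = r g * r g' * (l a * μ a g g') := by ring
    _ = r g * l g' * (r g' * μ g' (star g) a) := by rw [h1]; ring
    _ = l g * l g' * (r g * μ g a (star g')) := by
        rw [r_mul_mu_star_eq_l_mul_mu hss hstar h2 h3]; ring
    _ = r a * (l g * l g') * μ a g g' := by rw [← h2]; ring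

end Hypergroupoid

theorem stmt16_general {G : Type*} (star : G → G) (l r : G → ℕ)
    (hr : ∀ g, 0 < r g)
    (hss : ∀ g, star (star g) = g)
    (hstar : ∀ g, l (star g) = r g)
    (μ : G → G → G → ℕ)
    (h1 : ∀ a g g', l a * μ a g g' = l g' * μ g' (star g) a)
    (h2 : ∀ a g g', r a * μ a g g' = r g * μ g a (star g'))
    (h3 : ∀ a g g', μ a g g' = μ (star a) (star g') (star g))
    (χ : G → ℚ) (hχ : ∀ g, χ g = (l g : ℚ) / (r g : ℚ)) :
    ∀ a g g', 0 < μ a g g' → χ a = χ g * χ g' := by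
  intro a g g' hμ
  have hr₀ : ∀ g, (r g : ℚ) ≠ 0 := fun g => Nat.cast_ne_zero.mpr (hr g).ne'
  rw [hχ, hχ, hχ, div_mul_div_comm, div_eq_div_iff (hr₀ a) (mul_ne_zero (hr₀ g) (hr₀ g'))]
  exact_mod_cast (l_mul_r_mul_eq_r_mul_l_mul_of_pos hss hstar h1 h2 h3 hμ).trans (mul_comm _ _)

/-- For a locally finite hypergroupoid with finite positive left and right multiplicities
`l`, `r`, involution `star`, and coefficients `μ` satisfying the combinatorial identities
(1) `l a · μ(a;g,g') = l g' · μ(g';g*,a)`, (2) `r a · μ(a;g,g') = r g · μ(g;a,g'*)`,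
(3) `μ(a;g,g') = μ(a*;g'*,g*)`, together with `l(g*) = r g`, the function
`χ(g) = l g / r g` is multiplicative: `μ(a;g,g') > 0` implies `χ(a) = χ(g)·χ(g')`. -/
theorem stmt16 {G : Type*} (star : G → G) (l r : G → ℕ)
    (hl : ∀ g, 0 < l g) (hr : ∀ g, 0 < r g)
    (hss : ∀ g, star (star g) = g)
    (hstar : ∀ g, l (star g) = r g)
    (μ : G → G → G → ℕ)
    (h1 : ∀ a g g', l a * μ a g g' = l g' * μ g' (star g) a)
    (h2 : ∀ a g g', r a * μ a g g' = r g * μ g a (star g'))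
    (h3 : ∀ a g g', μ a g g' = μ (star a) (star g') (star g))
    (χ : G → ℚ) (hχ : ∀ g, χ g = (l g : ℚ) / (r g : ℚ)) :
    ∀ a g g', 0 < μ a g g' → χ a = χ g * χ g' :=
  stmt16_general star l r hr hss hstar μ h1 h2 h3 χ hχ
end

section
/- Let A be a *-algebra over ℚ with additive basis {[g] : g ∈ G} for a locally finite hypergroupoid G, multiplication [g][g'] = Σ_{a∈g∘g'} μ(a;g,g')[a] and involution [g]* = χ(g)[g*] with χ(g) = |g|_l/|g|_r. Define the weight η on basis elements by η([q]) = 1 if q is a unit and 0 otherwise, and the one-parameter family σ_t([g]) = χ(g)^{it}[g]. Then η satisfies the algebraic KMS₁ identity: η([q]·σ_i([q'])) = η([q']·[q]) for all arrows q, q', where σ_i([q']) = χ(q')^{-1}[q']. -/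
/-- The convolution product on the hypergroupoid algebra `ℚ[G]`:
`[g]·[g'] = Σ_{a ∈ g∘g'} μ(a;g,g')·[a]`, extended bilinearly. -/
noncomputable def mulA {G : Type*} (cmp : G → G → Finset G) (μ : G → G → G → ℕ)
    (x y : G →₀ ℚ) : G →₀ ℚ :=
  x.sum fun g c => y.sum fun g' c' => ∑ a ∈ cmp g g', Finsupp.single a (c * c' * (μ a g g' : ℚ))

/-- The weight `η`: sum of the coefficients of the unit arrows. -/
noncomputable def etaW {G : Type*} (E : Set G) [DecidablePred (· ∈ E)] (x : G →₀ ℚ) : ℚ :=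
  ∑ e ∈ x.support.filter (· ∈ E), x e

/-!
Only units contribute to `η`, and a unit occurs in `q ∘ q'` only when `q' = q*`; so both sides
vanish unless `q' = q*`. Then each product contains exactly one unit, and since
`χ(q*) = |q*|_l / |q*|_r = |q|_r / |q*|_r`, the left side is
`χ(q*)⁻¹ · μ(e; q, q*) = (|q*|_r / |q|_r) · |q|_r = |q*|_r = μ(e'; q*, q)`, the right side.
-/

section

variable {G : Type*}

lemma mulA_single (cmp : G → G → Finset G) (μ : G → G → G → ℕ) (q q' : G) (c c' : ℚ) :
    mulA cmp μ (Finsupp.single q c) (Finsupp.single q' c') =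
      ∑ a ∈ cmp q q', Finsupp.single a (c * c' * (μ a q q' : ℚ)) := by
  simp [mulA]

variable (E : Set G) [DecidablePred (· ∈ E)]

lemma etaW_eq_sum_filter {x : G →₀ ℚ} {s : Finset G} (hs : x.support ⊆ s) :
    etaW E x = ∑ e ∈ s.filter (· ∈ E), x e :=
  Finset.sum_subset (Finset.filter_subset_filter _ hs) fun e _ he => by simp_all

lemma etaW_sum_single (s : Finset G) (f : G → ℚ) :
    etaW E (∑ a ∈ s, Finsupp.single a (f a)) = ∑ e ∈ s.filter (· ∈ E), f e := by
  classical
  have hsupp : (∑ a ∈ s, Finsupp.single a (f a)).support ⊆ s := fun e he => by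
    by_contra hes
    simp [Finsupp.finsetSum_apply, Finsupp.single_apply, hes] at he
  rw [etaW_eq_sum_filter E hsupp]
  refine Finset.sum_congr rfl fun e he => ?_
  simp [Finsupp.finsetSum_apply, Finsupp.single_apply, (Finset.mem_filter.mp he).1]

lemma etaW_mulA_single (cmp : G → G → Finset G) (μ : G → G → G → ℕ) (q q' : G) (c c' : ℚ) :
    etaW E (mulA cmp μ (Finsupp.single q c) (Finsupp.single q' c')) =
      c * c' * ∑ e ∈ (cmp q q').filter (· ∈ E), (μ e q q' : ℚ) := by
  rw [mulA_single, etaW_sum_single, Finset.mul_sum]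

variable {E} {star : G → G} {cmp : G → G → Finset G}

lemma filter_mem_cmp_eq_empty (hunit : ∀ q q' e, e ∈ E → e ∈ cmp q q' → q' = star q)
    {q q' : G} (hq : q' ≠ star q) : (cmp q q').filter (· ∈ E) = ∅ :=
  Finset.filter_eq_empty_iff.mpr fun e he heE => hq (hunit q q' e heE he)

lemma sum_filter_mem_cmp_star {μ : G → G → G → ℕ} {r : G → ℕ} {q : G}
    (hμunit : ∀ e, e ∈ E → e ∈ cmp q (star q) → μ e q (star q) = r q)
    (hone : ∃! e, e ∈ E ∧ e ∈ cmp q (star q)) :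
    ∑ e ∈ (cmp q (star q)).filter (· ∈ E), (μ e q (star q) : ℚ) = r q := by
  obtain ⟨e, ⟨heE, he⟩, huniq⟩ := hone
  have hunits : (cmp q (star q)).filter (· ∈ E) = {e} :=
    Finset.eq_singleton_iff_unique_mem.mpr
      ⟨Finset.mem_filter.mpr ⟨he, heE⟩, fun a ha => huniq a (Finset.mem_filter.mp ha).symm⟩
  rw [hunits, Finset.sum_singleton, hμunit e heE he]

end

theorem stmt17_general {G : Type*} (star : G → G) (cmp : G → G → Finset G) (μ : G → G → G → ℕ)
    (l r : G → ℕ) (E : Set G) [DecidablePred (· ∈ E)]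
    (hr : ∀ g, 0 < r g)
    (hss : ∀ g, star (star g) = g)
    (hls : ∀ g, l (star g) = r g)
    (hunit : ∀ q q' e, e ∈ E → e ∈ cmp q q' → q' = star q)
    (hμunit : ∀ q e, e ∈ E → e ∈ cmp q (star q) → μ e q (star q) = r q)
    (hone : ∀ q, ∃! e, e ∈ E ∧ e ∈ cmp q (star q))
    (χ : G → ℚ) (hχ : ∀ g, χ g = (l g : ℚ) / (r g : ℚ)) :
    ∀ q q' : G,
      etaW E (mulA cmp μ (Finsupp.single q 1) ((χ q')⁻¹ • Finsupp.single q' 1)) =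
        etaW E (mulA cmp μ (Finsupp.single q' 1) (Finsupp.single q 1)) := by
  intro q q'
  rw [Finsupp.smul_single, smul_eq_mul, mul_one, etaW_mulA_single, etaW_mulA_single]
  by_cases hq : q' = star q
  · subst hq
    have hstar := sum_filter_mem_cmp_star (hμunit (star q)) (hone (star q))
    rw [hss] at hstar
    rw [sum_filter_mem_cmp_star (hμunit q) (hone q), hstar, hχ, hls]
    have hrq : (r q : ℚ) ≠ 0 := Nat.cast_ne_zero.mpr (hr q).ne'
    field_simp
  · have hq' : q ≠ star q' := fun h => hq (h ▸ (hss q').symm)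
    rw [filter_mem_cmp_eq_empty hunit hq, filter_mem_cmp_eq_empty hunit hq']
    simp

/-- For a locally finite hypergroupoid, the weight `η` (with `η([q]) = 1` iff `q` is a
unit) satisfies the algebraic KMS₁ identity `η([q]·σ_i([q'])) = η([q']·[q])`, where
`σ_i([q']) = χ(q')⁻¹·[q']` and `χ(g) = |g|_l / |g|_r`. -/
theorem stmt17 {G : Type*} (star : G → G) (cmp : G → G → Finset G) (μ : G → G → G → ℕ)
    (l r : G → ℕ) (E : Set G) [DecidablePred (· ∈ E)]
    (hl : ∀ g, 0 < l g) (hr : ∀ g, 0 < r g)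
    (hss : ∀ g, star (star g) = g)
    (hls : ∀ g, l (star g) = r g)
    (hunit : ∀ q q' e, e ∈ E → e ∈ cmp q q' → q' = star q)
    (hμunit : ∀ q e, e ∈ E → e ∈ cmp q (star q) → μ e q (star q) = r q)
    (hone : ∀ q, ∃! e, e ∈ E ∧ e ∈ cmp q (star q))
    (χ : G → ℚ) (hχ : ∀ g, χ g = (l g : ℚ) / (r g : ℚ)) :
    ∀ q q' : G,
      etaW E (mulA cmp μ (Finsupp.single q 1) ((χ q')⁻¹ • Finsupp.single q' 1)) =
        etaW E (mulA cmp μ (Finsupp.single q' 1) (Finsupp.single q 1)) :=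
  stmt17_general star cmp μ l r E hr hss hls hunit hμunit hone χ hχ
end
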